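/- Let q ∈ ℝ and let H denote the Heaviside function and δ the Dirac distribution. Then the triple (E, u, σ) defined by E(t,x) = q(H(x) − H(x−t)), u(t,x) = q(t−x)(H(x) − H(x−t)), σ(t,x) = q·δ(x) solves the linear Cauchy problem ∂_t E + ∂_x E = σ, ∂_t u = E, ∂_t σ = 0 (in D'), with initial data E(0,·) = 0, u(0,·) = 0, σ(0,·) = q·δ. -/

import Mathlib

open MeasureTheory

/-- Heaviside function. -/
noncomputable def H (x : ℝ) : ℝ := if 0 ≤ x then 1 else 0

lemma key (f : ℝ → ℝ) (s : ℝ) :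
    ∫ x : ℝ, (H x - H (x - s)) * f x = ∫ x in (0:ℝ)..s, f x := by
  have hz : ∀ᵐ x : ℝ, x ∉ ({0, s} : Set ℝ) := by
    rw [ae_iff]
    refine measure_mono_null ?_ ((Set.toFinite ({0, s} : Set ℝ)).measure_zero volume)
    intro x hx
    exact not_not.mp hx
  rcases le_or_gt 0 s with hs | hs
  · have hae : (fun x => (H x - H (x - s)) * f x) =ᵐ[volume]
        Set.indicator (Set.Ioc 0 s) f := by
      filter_upwards [hz] with x hx
      simp only [Set.mem_insert_iff, Set.mem_singleton_iff, not_or] at hx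
      obtain ⟨hx0, hxs⟩ := hx
      by_cases h1 : 0 ≤ x <;> by_cases h2 : 0 ≤ x - s <;>
        simp only [H, h1, h2, if_true, if_false, Set.indicator_apply, Set.mem_Ioc]
      · rw [if_neg (fun h => hxs (le_antisymm h.2 (by linarith)))]; ring
      · rw [if_pos ⟨lt_of_le_of_ne h1 (Ne.symm hx0), by linarith⟩]; ring
      · exact absurd (lt_of_lt_of_le (lt_of_not_ge h1) hs) (not_lt.mpr (by linarith))
      · rw [if_neg (fun h => h1 h.1.le)]; ring
    rw [integral_congr_ae hae, integral_indicator measurableSet_Ioc,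
      intervalIntegral.integral_of_le hs]
  · have hae : (fun x => (H x - H (x - s)) * f x) =ᵐ[volume]
        (fun x => -Set.indicator (Set.Ioc s 0) f x) := by
      filter_upwards [hz] with x hx
      simp only [Set.mem_insert_iff, Set.mem_singleton_iff, not_or] at hx
      obtain ⟨hx0, hxs⟩ := hx
      by_cases h1 : 0 ≤ x <;> by_cases h2 : 0 ≤ x - s <;>
        simp only [H, h1, h2, if_true, if_false, Set.indicator_apply, Set.mem_Ioc]
      · rw [if_neg (fun h => hx0 (le_antisymm h.2 h1))]; ring
      · exact absurd (lt_of_lt_of_le hs h1) (not_lt.mpr (by linarith))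
      · rw [if_pos ⟨lt_of_le_of_ne (by linarith) (Ne.symm hxs), le_of_not_ge h1⟩]; ring
      · rw [if_neg (fun h => h.1.not_ge (by linarith))]; ring
    rw [integral_congr_ae hae, integral_neg, integral_indicator measurableSet_Ioc,
      ← intervalIntegral.integral_of_le hs.le, ← intervalIntegral.integral_symm]

/-- The triple E(t,x) = q(H(x) − H(x−t)), u(t,x) = q(t−x)(H(x) − H(x−t)), σ(t) = qδ
    solves the linearized system ∂_t E + ∂_x E = σ, ∂_t u = E, ∂_t σ = 0 distributionally
    for t ≥ 0, with initial data (0, 0, qδ). Each equation is tested against a smooth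
    compactly supported g, with ⟨∂_x E(t), g⟩ = −⟨E(t), g'⟩ and ⟨qδ, g⟩ = q·g(0). -/
theorem stmt_15 (q : ℝ) (g : ℝ → ℝ) (hg : ContDiff ℝ (⊤ : ℕ∞) g) (hgc : HasCompactSupport g) :
    -- ∂_t E + ∂_x E = σ :
    (∀ t : ℝ, 0 ≤ t → HasDerivAt (fun s : ℝ => ∫ x : ℝ, q * (H x - H (x - s)) * g x)
      (q * g 0 + ∫ x : ℝ, q * (H x - H (x - t)) * deriv g x) t) ∧
    -- ∂_t u = E :
    (∀ t : ℝ, 0 ≤ t → HasDerivAt (fun s : ℝ => ∫ x : ℝ, q * (s - x) * (H x - H (x - s)) * g x)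
      (∫ x : ℝ, q * (H x - H (x - t)) * g x) t) ∧
    -- ∂_t σ = 0 :
    (∀ t : ℝ, 0 ≤ t → HasDerivAt (fun _ : ℝ => q * g 0) 0 t) ∧
    -- initial data E(0,·) = 0, u(0,·) = 0, σ(0,·) = q·δ :
    (∫ x : ℝ, q * (H x - H (x - 0)) * g x = 0) ∧
    (∫ x : ℝ, q * ((0 : ℝ) - x) * (H x - H (x - 0)) * g x = 0) := by
  have hgcont : Continuous g := hg.continuous
  have hdg : Continuous (deriv g) := hg.continuous_deriv (by simp)
  -- E(t) tested: rewrite as interval integral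
  have hE : ∀ s : ℝ, (∫ x : ℝ, q * (H x - H (x - s)) * g x) = ∫ x in (0:ℝ)..s, q * g x := by
    intro s
    rw [← key (fun x => q * g x) s]
    congr 1; ext x; ring
  have hE' : ∀ s : ℝ, (∫ x : ℝ, q * (H x - H (x - s)) * deriv g x)
      = ∫ x in (0:ℝ)..s, q * deriv g x := by
    intro s
    rw [← key (fun x => q * deriv g x) s]
    congr 1; ext x; ring
  have hqg : Continuous fun x => q * g x := continuous_const.mul hgcont
  -- FTC derivative of s ↦ ∫₀ˢ q g
  have hFTC : ∀ t : ℝ, HasDerivAt (fun s : ℝ => ∫ x in (0:ℝ)..s, q * g x) (q * g t) t := by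
    intro t
    exact intervalIntegral.integral_hasDerivAt_right (hqg.intervalIntegrable 0 t)
      (hqg.stronglyMeasurableAtFilter _ _) hqg.continuousAt
  refine ⟨?_, ?_, fun t _ => hasDerivAt_const t _, ?_, ?_⟩
  · intro t _
    have h1 : (∫ x in (0:ℝ)..t, q * deriv g x) = q * g t - q * g 0 := by
      rw [intervalIntegral.integral_const_mul, intervalIntegral.integral_deriv_eq_sub
        (fun x _ => (hg.differentiable (by simp)).differentiableAt)
        (hdg.intervalIntegrable 0 t)]
      ring
    have : q * g 0 + (∫ x : ℝ, q * (H x - H (x - t)) * deriv g x) = q * g t := by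
      rw [hE', h1]; ring
    rw [this]
    simpa only [funext hE] using hFTC t
  · intro t _
    have hu : ∀ s : ℝ, (∫ x : ℝ, q * (s - x) * (H x - H (x - s)) * g x)
        = s * (∫ x in (0:ℝ)..s, q * g x) - ∫ x in (0:ℝ)..s, q * x * g x := by
      intro s
      have h1 : (∫ x : ℝ, q * (s - x) * (H x - H (x - s)) * g x)
          = ∫ x : ℝ, (H x - H (x - s)) * (q * (s - x) * g x) := by
        congr 1; ext x; ring
      rw [h1, key (fun x => q * (s - x) * g x) s]
      have h2 : (∫ x in (0:ℝ)..s, q * (s - x) * g x)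
          = s * (∫ x in (0:ℝ)..s, q * g x) - ∫ x in (0:ℝ)..s, q * x * g x := by
        have hc1 : Continuous fun x : ℝ => s * (q * g x) := by fun_prop
        have hc2 : Continuous fun x : ℝ => q * x * g x := by fun_prop
        rw [← intervalIntegral.integral_const_mul, ← intervalIntegral.integral_sub
          (hc1.intervalIntegrable 0 s) (hc2.intervalIntegrable 0 s)]
        congr 1; ext x; ring
      rw [h2]
    have hB : HasDerivAt (fun s : ℝ => ∫ x in (0:ℝ)..s, q * x * g x) (q * t * g t) t := by
      have hc : Continuous fun x : ℝ => q * x * g x :=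
        (continuous_const.mul continuous_id).mul hgcont
      exact intervalIntegral.integral_hasDerivAt_right (hc.intervalIntegrable 0 t)
        (hc.stronglyMeasurableAtFilter _ _) hc.continuousAt
    have hA := ((hasDerivAt_id t).mul (hFTC t)).sub hB
    have : (1 * (∫ x in (0:ℝ)..t, q * g x) + t * (q * g t)) - q * t * g t
        = ∫ x : ℝ, q * (H x - H (x - t)) * g x := by
      rw [hE]; ring
    rw [← this]
    simpa only [funext hu, id, Pi.mul_def, Pi.sub_def] using hA
  · simp [sub_zero, sub_self]
  · simp [sub_zero, sub_self]
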